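/- For every integer n ≥ 1, the sum over all type-B permutation tableaux T of size n of the number of diagonal cells of T that contain a 1 equals (n/2)·|B_n|; equivalently, the expected number of ones on the diagonal of a uniformly random type-B permutation tableau of size n is n/2. -/

import Mathlib

/-- A type-B permutation tableau of size `n`, encoded via its border steps and filling.

Border steps are indexed by `Fin n` (index `i` is the `(i+1)`-th step from the
northeast corner); `west i = true` means the `(i+1)`-th step is a west step
(giving a column) and `west i = false` means it is a south step (giving a row
of the original, unshifted diagram).

Rows of the shifted diagram are also indexed by `Fin n`: a south step `r` indexes
the corresponding original row, and a west step `r` indexes the inserted diagonal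
row whose diagonal cell lies in the column of `r`.  The cell in row `r` and the
column of a west step `c` exists iff (`r` is south and `r < c`) or (`r` is west
and `r ≤ c`); in particular the diagonal cell of the column of `c` is `(c, c)`.
Columns are ordered left-to-right by decreasing step index, rows top-to-bottom as:
diagonal rows by decreasing step index, then original rows by increasing step index.

`filling r c = true` means the cell `(r, c)` contains a 1; `filling` is `false`
outside the cells of the diagram (field `support`).  The fields `col_one`,
`no_bad_zero` and `diag_zero` are the three defining conditions of a type-B
permutation tableau. -/
structure TypeBTableau (n : ℕ) where
  west : Fin n → Bool
  filling : Fin n → Fin n → Bool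
  support : ∀ r c : Fin n, filling r c = true →
    west c = true ∧ ((west r = false ∧ (r : ℕ) < (c : ℕ)) ∨ (west r = true ∧ (r : ℕ) ≤ (c : ℕ)))
  col_one : ∀ c : Fin n, west c = true → ∃ r : Fin n, filling r c = true
  no_bad_zero : ∀ r c : Fin n,
    (west c = true ∧ ((west r = false ∧ (r : ℕ) < (c : ℕ)) ∨ (west r = true ∧ (r : ℕ) ≤ (c : ℕ)))) →
    filling r c = false →
    ¬((∃ r' : Fin n,
        ((west r' = true ∧ west r = false) ∨
         (west r' = true ∧ west r = true ∧ (r : ℕ) < (r' : ℕ)) ∨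
         (west r' = false ∧ west r = false ∧ (r' : ℕ) < (r : ℕ))) ∧
        filling r' c = true) ∧
      (∃ c' : Fin n, (c : ℕ) < (c' : ℕ) ∧ filling r c' = true))
  diag_zero : ∀ j : Fin n, west j = true → filling j j = false →
    ∀ c : Fin n, filling j c = false

namespace TypeBTableau

noncomputable instance instFintype {n : ℕ} : Fintype (TypeBTableau n) :=
  Fintype.ofInjective (fun T => (T.west, T.filling)) (by
    rintro ⟨w1, f1, _, _, _, _⟩ ⟨w2, f2, _, _, _, _⟩ h
    simp only [Prod.mk.injEq] at h
    obtain ⟨h1, h2⟩ := h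
    subst h1; subst h2; rfl)

end TypeBTableau

open Finset

/-- The number of diagonal cells of a type-B permutation tableau containing a 1:
the diagonal cell of the column of a west step `j` is the cell `(j, j)`. -/
def TypeBTableau.numDiagOnes {n : ℕ} (T : TypeBTableau n) : ℕ :=
  (Finset.univ.filter (fun j : Fin n => T.west j = true ∧ T.filling j j = true)).card

/-!
Fix a step `j` and cut every tableau of size `n` after its first `j + 1` steps. Appending a step
to a tableau `W` amounts to choosing the bit `b` of the new diagonal cell and the set `F` of
unrestricted rows of `W` that get a 1 in the new column. The result has `#F + 1` unrestricted
rows if `b = true`, and a number depending on `F` and the order of the rows if `b = false`;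
incrementing `F` as a binary number matches the two distributions. As the number of completions
of a tableau to size `n` depends only on its number of unrestricted rows, the diagonal cell of
step `j` holds a 1 in exactly half of the tableaux; summing over `j` gives `n / 2 · |B_n|`.
-/

open scoped Classical

namespace TypeBTableau

variable {k m n : ℕ}

def extensionSum (G : ℕ → ℕ) (a : ℕ) : ℕ := ∑ i ∈ range (a + 1), a.choose i * G (i + 1)

theorem sum_powerset_card_add_one {α : Type*} (S : Finset α) (G : ℕ → ℕ) :
    ∑ F ∈ S.powerset, G (#F + 1) = extensionSum G #S := by
  simp [sum_powerset_apply_card (fun i => G (i + 1)), extensionSum]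

section Increment

variable {α : Type*} [LinearOrder α] (S : Finset α)

/-- The number of unrestricted rows after appending the step encoded by `b` and `F` as in
`extend`, when `S` holds the keys of the unrestricted rows; the last summand is the new row. -/
def unrestrictedCount (F : Finset α) (b : Bool) : ℕ :=
  #{x ∈ S | x ∈ F ∨ (b = false ∧ ∀ y ∈ F, x < y)} + if b = true ∨ F = ∅ then 1 else 0

/-- Reading a subset of `S` as a binary number whose least significant digit sits at the
minimum of `S`, this is the successor modulo `2 ^ #S`: the trailing 1s are cleared and the
lowest 0 is set. -/
def succSubset (F : Finset α) : Finset α :=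
  if h : (S \ F).Nonempty then insert ((S \ F).min' h) {x ∈ F | (S \ F).min' h < x} else ∅

def predSubset (F : Finset α) : Finset α :=
  if h : F.Nonempty then F.erase (F.min' h) ∪ {x ∈ S | x < F.min' h} else S

variable {S} {F : Finset α}

theorem succSubset_subset (hF : F ⊆ S) : succSubset S F ⊆ S := by
  unfold succSubset
  split_ifs with h
  · exact insert_subset (mem_sdiff.1 (min'_mem _ h)).1 ((filter_subset _ _).trans hF)
  · exact empty_subset _

theorem succSubset_of_nonempty (h : (S \ F).Nonempty) :
    succSubset S F = insert ((S \ F).min' h) {x ∈ F | (S \ F).min' h < x} :=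
  dif_pos h

theorem succSubset_of_not_nonempty (hF : F ⊆ S) (h : ¬(S \ F).Nonempty) :
    F = S ∧ succSubset S F = ∅ := by
  refine ⟨hF.antisymm fun x hx => ?_, by simp [succSubset, h]⟩
  by_contra hxF
  exact h ⟨x, mem_sdiff.2 ⟨hx, hxF⟩⟩

theorem min'_succSubset (h : (S \ F).Nonempty) (hne : (succSubset S F).Nonempty) :
    (succSubset S F).min' hne = (S \ F).min' h := by
  simp only [succSubset_of_nonempty h] at hne ⊢
  refine le_antisymm (min'_le _ _ (mem_insert_self _ _)) (le_min' _ _ _ fun y hy => ?_)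
  rcases mem_insert.1 hy with rfl | hy
  · exact le_rfl
  · exact (mem_filter.1 hy).2.le

theorem ne_min'_sdiff (h : (S \ F).Nonempty) {x : α} (hx : x ∈ F) :
    x ≠ (S \ F).min' h :=
  fun hx' => (mem_sdiff.1 (min'_mem _ h)).2 (hx' ▸ hx)

theorem mem_of_lt_min'_sdiff (h : (S \ F).Nonempty) {x : α} (hx : x ∈ S)
    (hlt : x < (S \ F).min' h) : x ∈ F := by
  by_contra hxF
  exact (min'_le _ _ (mem_sdiff.2 ⟨hx, hxF⟩)).not_gt hlt

theorem predSubset_succSubset (hF : F ⊆ S) : predSubset S (succSubset S F) = F := by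
  by_cases h : (S \ F).Nonempty
  · have hne : (succSubset S F).Nonempty := by simp [succSubset, h]
    rw [predSubset, dif_pos hne, min'_succSubset h hne]
    ext x
    rw [succSubset_of_nonempty h]
    simp only [mem_union, mem_erase, mem_insert, mem_filter]
    constructor
    · rintro (⟨hx, rfl | ⟨hxF, -⟩⟩ | ⟨hxS, hlt⟩)
      · exact absurd rfl hx
      · exact hxF
      · exact mem_of_lt_min'_sdiff h hxS hlt
    · intro hxF
      rcases (ne_min'_sdiff h hxF).lt_or_gt with hlt | hgt
      · exact Or.inr ⟨hF hxF, hlt⟩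
      · exact Or.inl ⟨hgt.ne', Or.inr ⟨hxF, hgt⟩⟩
  · obtain ⟨rfl, h'⟩ := succSubset_of_not_nonempty hF h
    simp [predSubset, h']

theorem unrestrictedCount_succSubset (hF : F ⊆ S) :
    unrestrictedCount S (succSubset S F) false = #F + 1 := by
  by_cases h : (S \ F).Nonempty
  · obtain ⟨hpS, hpF⟩ := mem_sdiff.1 (min'_mem _ h)
    have hrows : {x ∈ S | x ∈ succSubset S F ∨ (false = false ∧ ∀ y ∈ succSubset S F, x < y)} =
        insert ((S \ F).min' h) F := by
      ext x
      rw [succSubset_of_nonempty h]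
      simp only [mem_filter, mem_insert, forall_eq_or_imp, true_and]
      constructor
      · rintro ⟨hxS, (hx | ⟨hxF, -⟩) | ⟨hlt, -⟩⟩
        · exact Or.inl hx
        · exact Or.inr hxF
        · exact Or.inr (mem_of_lt_min'_sdiff h hxS hlt)
      · rintro (rfl | hxF)
        · exact ⟨hpS, Or.inl (Or.inl rfl)⟩
        refine ⟨hF hxF, ?_⟩
        rcases (ne_min'_sdiff h hxF).lt_or_gt with hlt | hgt
        · exact Or.inr ⟨hlt, fun y hy => hlt.trans hy.2⟩
        · exact Or.inl (Or.inr ⟨hxF, hgt⟩)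
    have hne : succSubset S F ≠ ∅ := by simp [succSubset, h]
    rw [unrestrictedCount, hrows, card_insert_of_notMem hpF]
    simp [hne]
  · obtain ⟨rfl, h'⟩ := succSubset_of_not_nonempty hF h
    simp [unrestrictedCount, h']

theorem unrestrictedCount_true (hF : F ⊆ S) :
    unrestrictedCount S F true = #F + 1 := by
  simp [unrestrictedCount, filter_mem_eq_inter, inter_eq_right.2 hF]

theorem sum_powerset_unrestrictedCount (G : ℕ → ℕ) (b : Bool) :
    ∑ F ∈ S.powerset, G (unrestrictedCount S F b) = extensionSum G #S := by
  rw [← sum_powerset_card_add_one]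
  cases b
  · have hmaps : ∀ F ∈ S.powerset, succSubset S F ∈ S.powerset := fun F hF =>
      mem_powerset.2 (succSubset_subset (mem_powerset.1 hF))
    have hinj : Set.InjOn (succSubset S) S.powerset :=
      Set.LeftInvOn.injOn fun F hF => predSubset_succSubset (mem_powerset.1 hF)
    symm
    refine sum_nbij (succSubset S) hmaps hinj
      (surjOn_of_injOn_of_card_le _ hmaps hinj le_rfl) fun F hF => ?_
    rw [unrestrictedCount_succSubset (mem_powerset.1 hF)]
  · exact sum_congr rfl fun F hF => by rw [unrestrictedCount_true (mem_powerset.1 hF)]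

end Increment

@[ext]
theorem ext {T₁ T₂ : TypeBTableau n} (hw : T₁.west = T₂.west) (hf : T₁.filling = T₂.filling) :
    T₁ = T₂ := by
  cases T₁; cases T₂; cases hw; cases hf; rfl

/-- Rows ordered top to bottom have increasing keys. The key of a row depends only on its
step and its direction, so it does not change when steps are appended. -/
def rowKey (w : Fin n → Bool) (r : Fin n) : ℤ := if w r then -((r : ℤ) + 1) else r

theorem rowKey_lt_rowKey_iff (w : Fin n → Bool) (r' r : Fin n) :
    rowKey w r' < rowKey w r ↔
      (w r' = true ∧ w r = false) ∨ (w r' = true ∧ w r = true ∧ (r : ℕ) < r') ∨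
        (w r' = false ∧ w r = false ∧ (r' : ℕ) < r) := by
  unfold rowKey
  cases w r' <;> cases w r <;> simp <;> omega

theorem rowKey_injective (w : Fin n → Bool) : Function.Injective (rowKey w) := by
  intro r r' h
  unfold rowKey at h
  ext
  cases hr : w r <;> cases hr' : w r' <;> simp [hr, hr'] at h <;> omega

theorem rowKey_last_lt (w : Fin (m + 1) → Bool) (hw : w (Fin.last m) = true) (r : Fin m) :
    rowKey w (Fin.last m) < rowKey w r.castSucc :=
  (rowKey_lt_rowKey_iff w _ _).2 <| by cases w r.castSucc <;> simp [hw]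

def IsCell (w : Fin n → Bool) (r c : Fin n) : Prop :=
  w c = true ∧ ((w r = false ∧ (r : ℕ) < (c : ℕ)) ∨ (w r = true ∧ (r : ℕ) ≤ (c : ℕ)))

theorem not_isCell_last_castSucc (w : Fin (m + 1) → Bool) (c : Fin m) :
    ¬IsCell w (Fin.last m) c.castSucc := by
  rintro ⟨-, ⟨-, h⟩ | ⟨-, h⟩⟩ <;> simp at h <;> omega

theorem filling_eq_false_of_not_isCell {T : TypeBTableau n} {r c : Fin n} (h : ¬IsCell T.west r c) :
    T.filling r c = false :=
  Bool.eq_false_iff.2 fun h1 => h (T.support r c h1)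

theorem filling_eq_false_of_one_above {T : TypeBTableau n} {r r' c c' : Fin n}
    (hc : IsCell T.west r c) (h0 : T.filling r c = false) (hr' : rowKey T.west r' < rowKey T.west r)
    (h1 : T.filling r' c = true) (hcc' : c < c') : T.filling r c' = false :=
  Bool.eq_false_iff.2 fun h => T.no_bad_zero r c hc h0
    ⟨⟨r', (rowKey_lt_rowKey_iff _ _ _).1 hr', h1⟩, ⟨c', hcc', h⟩⟩

def NoOneAboveZero (T : TypeBTableau n) (r c : Fin n) : Prop :=
  IsCell T.west r c → T.filling r c = false →
    ∀ r', rowKey T.west r' < rowKey T.west r → T.filling r' c = false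

/-- Row `r` may receive a 1 in a new leftmost column. -/
def IsUnrestricted (T : TypeBTableau n) (r : Fin n) : Prop :=
  (∀ c, T.NoOneAboveZero r c) ∧ (T.west r = true → T.filling r r = true)

noncomputable def unrestrictedRows (T : TypeBTableau n) : Finset (Fin n) :=
  univ.filter T.IsUnrestricted

@[simp]
theorem mem_unrestrictedRows {T : TypeBTableau n} {r : Fin n} :
    r ∈ T.unrestrictedRows ↔ T.IsUnrestricted r := by
  simp [unrestrictedRows]

def restrict (h : m ≤ n) (T : TypeBTableau n) : TypeBTableau m where
  west r := T.west (r.castLE h)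
  filling r c := T.filling (r.castLE h) (c.castLE h)
  support r c hf := T.support _ _ hf
  col_one c hc := by
    obtain ⟨r, hr⟩ := T.col_one _ hc
    have hrc : (r : ℕ) ≤ c := by
      rcases (T.support _ _ hr).2 with ⟨-, h'⟩ | ⟨-, h'⟩ <;> simp at h' <;> omega
    exact ⟨⟨r, by omega⟩, hr⟩
  no_bad_zero r c hc h0 := by
    rintro ⟨⟨r', hr', h1⟩, ⟨c', hcc', h1'⟩⟩
    exact T.no_bad_zero _ _ hc h0 ⟨⟨_, hr', h1⟩, ⟨c'.castLE h, hcc', h1'⟩⟩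
  diag_zero j hj h0 c := T.diag_zero _ hj h0 _

theorem restrict_refl (T : TypeBTableau n) : T.restrict le_rfl = T := rfl

theorem restrict_restrict (T : TypeBTableau n) (h₁ : k ≤ m) (h₂ : m ≤ n) :
    (T.restrict h₂).restrict h₁ = T.restrict (h₁.trans h₂) := rfl

abbrev dropLast (T : TypeBTableau (m + 1)) : TypeBTableau m := T.restrict m.le_succ

@[simp]
theorem dropLast_west (T : TypeBTableau (m + 1)) (r : Fin m) :
    T.dropLast.west r = T.west r.castSucc := rfl

@[simp]
theorem dropLast_filling (T : TypeBTableau (m + 1)) (r c : Fin m) :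
    T.dropLast.filling r c = T.filling r.castSucc c.castSucc := rfl

/-- Appends step `m + 1`. A west step adds a new leftmost column with 1s in the rows of `F`
and, if `b`, in its diagonal cell; `b = false` and `F = ∅` give a south step, i.e. an empty
bottom row. -/
def extend (W : TypeBTableau m) (b : Bool) (F : Finset (Fin m))
    (hF : F ⊆ W.unrestrictedRows) : TypeBTableau (m + 1) where
  west := Fin.lastCases (b || decide F.Nonempty) W.west
  filling := Fin.lastCases (Fin.lastCases b fun _ => false)
    fun r => Fin.lastCases (decide (r ∈ F)) (W.filling r)
  support r c hf := by
    induction r using Fin.lastCases <;> induction c using Fin.lastCases <;>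
      simp only [Fin.lastCases_last, Fin.lastCases_castSucc, Fin.val_last,
        Fin.val_castSucc, decide_eq_true_eq] at hf ⊢
    case last.last => simp [hf]
    case last.cast => simp at hf
    case cast.last r =>
      refine ⟨by simp [show F.Nonempty from ⟨r, hf⟩], ?_⟩
      cases W.west r <;> simp [r.isLt, r.isLt.le]
    case cast.cast r c => exact W.support r c hf
  col_one c hc := by
    induction c using Fin.lastCases
    case last =>
      simp only [Fin.lastCases_last, Bool.or_eq_true, decide_eq_true_eq] at hc
      rcases hc with hb | ⟨r, hr⟩
      · exact ⟨Fin.last m, by simpa using hb⟩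
      · exact ⟨r.castSucc, by simpa using hr⟩
    case cast c =>
      obtain ⟨r, hr⟩ := W.col_one c (by simpa using hc)
      exact ⟨r.castSucc, by simpa using hr⟩
  no_bad_zero r c hc h0 := by
    rintro ⟨⟨r', hr', h1⟩, ⟨c', hcc', h1'⟩⟩
    obtain ⟨c, rfl⟩ := Fin.exists_castSucc_eq.2 (Fin.ne_last_of_lt hcc')
    obtain ⟨r, rfl⟩ := Fin.exists_castSucc_eq.2 fun (hr : r = Fin.last m) => by
      subst hr
      exact not_isCell_last_castSucc _ c hc
    obtain ⟨r', rfl⟩ := Fin.exists_castSucc_eq.2 fun (hr' : r' = Fin.last m) => by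
      simp [hr'] at h1
    simp only [Fin.lastCases_castSucc, Fin.val_castSucc] at hc h0 hr' h1
    induction c' using Fin.lastCases
    · -- the 1 to the left is in the new column, so `r ∈ F` is unrestricted in `W`
      simp only [Fin.lastCases_castSucc, Fin.lastCases_last, decide_eq_true_eq] at h1'
      have := (mem_unrestrictedRows.1 (hF h1')).1 c hc h0 r' ((rowKey_lt_rowKey_iff _ _ _).2 hr')
      simp [this] at h1
    · simp only [Fin.lastCases_castSucc, Fin.val_castSucc] at hcc' h1'
      exact W.no_bad_zero r c hc h0 ⟨⟨r', hr', h1⟩, ⟨_, hcc', h1'⟩⟩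
  diag_zero j hj h0 c := by
    induction j using Fin.lastCases <;> induction c using Fin.lastCases <;>
      simp only [Fin.lastCases_last, Fin.lastCases_castSucc] at hj h0 ⊢
    case last.last => exact h0
    case cast.last j =>
      simpa using fun hj' => by simp [(mem_unrestrictedRows.1 (hF hj')).2 hj] at h0
    case cast.cast j c => exact W.diag_zero j hj h0 c

noncomputable def lastColumn (T : TypeBTableau (m + 1)) : Finset (Fin m) :=
  univ.filter fun r => T.filling r.castSucc (Fin.last m) = true

section extend

variable (W : TypeBTableau m) (b : Bool) (F : Finset (Fin m)) (hF : F ⊆ W.unrestrictedRows)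

@[simp]
theorem extend_west_castSucc (r : Fin m) : (W.extend b F hF).west r.castSucc = W.west r := by
  simp [extend]

@[simp]
theorem extend_west_last : (W.extend b F hF).west (Fin.last m) = (b || decide F.Nonempty) := by
  simp [extend]

@[simp]
theorem extend_filling_castSucc_castSucc (r c : Fin m) :
    (W.extend b F hF).filling r.castSucc c.castSucc = W.filling r c := by
  simp [extend]

@[simp]
theorem extend_filling_castSucc_last (r : Fin m) :
    (W.extend b F hF).filling r.castSucc (Fin.last m) = decide (r ∈ F) := by
  simp [extend]

@[simp]
theorem extend_filling_last_castSucc (c : Fin m) :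
    (W.extend b F hF).filling (Fin.last m) c.castSucc = false := by
  simp [extend]

@[simp]
theorem extend_filling_last_last : (W.extend b F hF).filling (Fin.last m) (Fin.last m) = b := by
  simp [extend]

@[simp]
theorem dropLast_extend : (W.extend b F hF).dropLast = W := by
  ext <;> simp

@[simp]
theorem lastColumn_extend : (W.extend b F hF).lastColumn = F := by
  ext; simp [lastColumn]

@[simp]
theorem rowKey_extend_castSucc (r : Fin m) :
    rowKey (W.extend b F hF).west r.castSucc = rowKey W.west r := by
  simp [rowKey]

@[simp]
theorem isCell_extend_castSucc (r c : Fin m) :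
    IsCell (W.extend b F hF).west r.castSucc c.castSucc ↔ IsCell W.west r c := by
  simp [IsCell]

@[simp]
theorem isCell_extend_castSucc_last (r : Fin m) :
    IsCell (W.extend b F hF).west r.castSucc (Fin.last m) ↔ b = true ∨ F.Nonempty := by
  simp only [IsCell, extend_west_last, extend_west_castSucc, Fin.val_castSucc, Fin.val_last,
    Bool.or_eq_true, decide_eq_true_eq, and_iff_left_iff_imp]
  intro
  cases W.west r <;> simp [r.isLt, r.isLt.le]

theorem noOneAboveZero_extend_castSucc (r c : Fin m) :
    (W.extend b F hF).NoOneAboveZero r.castSucc c.castSucc ↔ W.NoOneAboveZero r c := by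
  simp [NoOneAboveZero, Fin.forall_fin_succ']

theorem rowKey_extend_last_lt (hw : b = true ∨ F.Nonempty) (r : Fin m) :
    rowKey (W.extend b F hF).west (Fin.last m) < rowKey W.west r := by
  simpa using rowKey_last_lt (W.extend b F hF).west (by simpa using hw) r

theorem noOneAboveZero_extend_castSucc_last (r : Fin m) :
    (W.extend b F hF).NoOneAboveZero r.castSucc (Fin.last m) ↔
      r ∈ F ∨ (b = false ∧ ∀ r' ∈ F, rowKey W.west r < rowKey W.west r') := by
  by_cases hr : r ∈ F
  · simp [NoOneAboveZero, hr]
  simp only [NoOneAboveZero, Fin.forall_fin_succ', isCell_extend_castSucc_last,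
    extend_filling_castSucc_last, extend_filling_last_last, rowKey_extend_castSucc, hr,
    decide_false, decide_eq_false_iff_not, true_implies, false_or]
  constructor
  · intro h
    have hb : b = false := by
      cases b
      · rfl
      · exact (h (Or.inl rfl)).2 (rowKey_extend_last_lt W _ F hF (Or.inl rfl) r)
    refine ⟨hb, fun r' hr' => ?_⟩
    rcases lt_trichotomy (rowKey W.west r) (rowKey W.west r') with hlt | heq | hgt
    · exact hlt
    · exact absurd (rowKey_injective _ heq ▸ hr') hr
    · exact absurd hr' ((h (Or.inr ⟨r', hr'⟩)).1 r' hgt)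
  · rintro ⟨rfl, h⟩ -
    exact ⟨fun r' hr' hr'F => (h r' hr'F).not_gt hr', fun _ => rfl⟩

theorem isUnrestricted_extend_last :
    (W.extend b F hF).IsUnrestricted (Fin.last m) ↔ b = true ∨ F = ∅ := by
  have hcol : ∀ c, (W.extend b F hF).NoOneAboveZero (Fin.last m) c := by
    intro c hc _ r' hr'
    induction c using Fin.lastCases
    · induction r' using Fin.lastCases
      · exact absurd hr' (lt_irrefl _)
      · exact absurd hr' (rowKey_last_lt _ hc.1 _).not_gt
    · exact absurd hc (not_isCell_last_castSucc _ _)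
  cases b <;> simp [IsUnrestricted, hcol, Finset.nonempty_iff_ne_empty]

theorem isUnrestricted_extend_castSucc (r : Fin m) :
    (W.extend b F hF).IsUnrestricted r.castSucc ↔
      r ∈ F ∨ (b = false ∧ W.IsUnrestricted r ∧ ∀ r' ∈ F, rowKey W.west r < rowKey W.west r') := by
  have hFr : r ∈ F → W.IsUnrestricted r := fun h => mem_unrestrictedRows.1 (hF h)
  simp only [IsUnrestricted, Fin.forall_fin_succ', noOneAboveZero_extend_castSucc,
    noOneAboveZero_extend_castSucc_last, extend_west_castSucc,
    extend_filling_castSucc_castSucc] at hFr ⊢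
  tauto

theorem card_unrestrictedRows_extend :
    #(W.extend b F hF).unrestrictedRows =
      unrestrictedCount (W.unrestrictedRows.image (rowKey W.west)) (F.image (rowKey W.west)) b := by
  have hk := rowKey_injective W.west
  have hrows : {x ∈ W.unrestrictedRows.image (rowKey W.west) |
      x ∈ F.image (rowKey W.west) ∨ (b = false ∧ ∀ y ∈ F.image (rowKey W.west), x < y)} =
      ({r | (W.extend b F hF).IsUnrestricted r.castSucc} : Finset (Fin m)).image
        (rowKey W.west) := by
    rw [filter_image]
    congr 1
    ext r
    simp only [mem_filter, mem_univ, true_and, isUnrestricted_extend_castSucc, mem_unrestrictedRows,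
      hk.mem_finset_image, forall_mem_image]
    have := fun h : r ∈ F => mem_unrestrictedRows.1 (hF h)
    tauto
  rw [unrestrictedCount, hrows, card_image_of_injective _ hk, unrestrictedRows, card_filter,
    card_filter, Fin.sum_univ_castSucc, isUnrestricted_extend_last]
  simp

end extend

theorem lastColumn_subset_unrestrictedRows (T : TypeBTableau (m + 1)) :
    T.lastColumn ⊆ T.dropLast.unrestrictedRows := by
  intro r hr
  simp only [lastColumn, mem_filter, mem_univ, true_and] at hr
  refine mem_unrestrictedRows.2 ⟨fun c hc h0 r' hr' => ?_, fun hw => ?_⟩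
  · by_contra h1
    have := filling_eq_false_of_one_above (T := T) (r := r.castSucc) (c := c.castSucc)
      (r' := r'.castSucc) (c' := Fin.last m) hc h0 hr'
      (Bool.not_eq_false _ ▸ h1) (Fin.castSucc_lt_last c)
    simp [this] at hr
  · by_contra h0
    simp [T.diag_zero r.castSucc hw (Bool.not_eq_true _ ▸ h0) (Fin.last m)] at hr

theorem extend_dropLast (T : TypeBTableau (m + 1)) :
    T.dropLast.extend (T.filling (Fin.last m) (Fin.last m)) T.lastColumn
      T.lastColumn_subset_unrestrictedRows = T := by
  have hlast : T.west (Fin.last m) =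
      (T.filling (Fin.last m) (Fin.last m) || decide T.lastColumn.Nonempty) := by
    cases hw : T.west (Fin.last m)
    · have h0 : ∀ r, T.filling r (Fin.last m) = false := fun r =>
        filling_eq_false_of_not_isCell fun h => absurd h.1 (by simp [hw])
      simp [h0, lastColumn]
    · obtain ⟨r, hr⟩ := T.col_one _ hw
      induction r using Fin.lastCases
      · simp [hr]
      · simp [show T.lastColumn.Nonempty from ⟨_, by simpa [lastColumn] using hr⟩]
  refine ext (funext fun r => ?_) (funext fun r => funext fun c => ?_)
  · induction r using Fin.lastCases <;> simp [hlast]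
  · induction r using Fin.lastCases <;> induction c using Fin.lastCases <;> simp [lastColumn]
    exact filling_eq_false_of_not_isCell (not_isCell_last_castSucc _ _)

theorem sum_dropLast_fiber_of_filling_eq_sum_powerset (W : TypeBTableau m) (b : Bool)
    (G : ℕ → ℕ) :
    ∑ T : TypeBTableau (m + 1) with T.dropLast = W ∧ T.filling (Fin.last m) (Fin.last m) = b,
        G #T.unrestrictedRows =
      ∑ F ∈ W.unrestrictedRows.powerset, G (unrestrictedCount
        (W.unrestrictedRows.image (rowKey W.west)) (F.image (rowKey W.west)) b) := by
  refine sum_bij' (fun T _ => T.lastColumn) (fun F hF => W.extend b F (mem_powerset.1 hF))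
    ?_ ?_ ?_ ?_ ?_
  · intro T hT
    obtain ⟨rfl, -⟩ := (mem_filter.1 hT).2
    exact mem_powerset.2 T.lastColumn_subset_unrestrictedRows
  · intro F _
    simp
  · intro T hT
    obtain ⟨rfl, rfl⟩ := (mem_filter.1 hT).2
    exact extend_dropLast T
  · intro F _
    exact lastColumn_extend ..
  · intro T hT
    obtain ⟨rfl, rfl⟩ := (mem_filter.1 hT).2
    conv_lhs => rw [← extend_dropLast T]
    rw [card_unrestrictedRows_extend]

theorem sum_dropLast_fiber_of_filling (W : TypeBTableau m) (b : Bool) (G : ℕ → ℕ) :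
    ∑ T : TypeBTableau (m + 1) with T.dropLast = W ∧ T.filling (Fin.last m) (Fin.last m) = b,
        G #T.unrestrictedRows =
      extensionSum G #W.unrestrictedRows := by
  have hk := rowKey_injective W.west
  rw [sum_dropLast_fiber_of_filling_eq_sum_powerset, ← card_image_of_injective _ hk,
    ← sum_powerset_unrestrictedCount _ b, powerset_image, sum_image (image_injective hk).injOn]

theorem sum_dropLast_fiber (W : TypeBTableau m) (G : ℕ → ℕ) :
    ∑ T : TypeBTableau (m + 1) with T.dropLast = W, G #T.unrestrictedRows =
      2 * extensionSum G #W.unrestrictedRows := by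
  rw [← sum_filter_add_sum_filter_not _ fun T => T.filling (Fin.last m) (Fin.last m) = true]
  simp only [filter_filter, Bool.not_eq_true, sum_dropLast_fiber_of_filling]
  ring

theorem sum_restrict_fiber_succ (V : TypeBTableau m) (h : m ≤ n)
    (f : TypeBTableau (n + 1) → ℕ) :
    ∑ T : TypeBTableau (n + 1) with T.restrict (h.trans n.le_succ) = V, f T =
      ∑ W : TypeBTableau n with W.restrict h = V, ∑ T : TypeBTableau (n + 1) with T.dropLast = W,
        f T := by
  rw [← sum_fiberwise_of_maps_to (g := dropLast) (t := {W | W.restrict h = V})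
    fun T hT => by simpa [restrict_restrict] using hT]
  refine sum_congr rfl fun W hW => sum_congr ?_ fun _ _ => rfl
  ext T
  simp only [mem_filter, mem_univ, true_and] at hW ⊢
  exact ⟨And.right, fun hT => ⟨by rw [← hW, ← hT, restrict_restrict], hT⟩⟩

theorem sum_restrict_fiber (V : TypeBTableau m) (h : m ≤ n) (G : ℕ → ℕ) :
    ∑ T : TypeBTableau n with T.restrict h = V, G #T.unrestrictedRows =
      ((fun G a => 2 * extensionSum G a)^[n - m] G) #V.unrestrictedRows := by
  induction n, h using Nat.le_induction generalizing G with
  | base =>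
    have hV : ({T : TypeBTableau m | T.restrict le_rfl = V} : Finset _) = {V} := by
      ext
      rw [mem_filter, restrict_refl]
      simp
    simp [hV]
  | succ n h ih =>
    rw [sum_restrict_fiber_succ V h, Nat.sub_add_comm h, Function.iterate_succ_apply,
      ← ih (fun a => 2 * extensionSum G a)]
    exact sum_congr rfl fun W _ => sum_dropLast_fiber W G

theorem card_filling_restrict_last (h : m + 1 ≤ n) (b : Bool) :
    #{T : TypeBTableau n | (T.restrict h).filling (Fin.last m) (Fin.last m) = b} =
      ∑ W : TypeBTableau m, extensionSum
        ((fun G a => 2 * extensionSum G a)^[n - (m + 1)] fun _ => 1) #W.unrestrictedRows := by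
  set N := (fun G a => 2 * extensionSum G a)^[n - (m + 1)] fun _ => 1
  calc #{T : TypeBTableau n | (T.restrict h).filling (Fin.last m) (Fin.last m) = b}
      = ∑ V : TypeBTableau (m + 1) with V.filling (Fin.last m) (Fin.last m) = b,
          #{T : TypeBTableau n | T.restrict h = V} := by
        rw [card_eq_sum_card_fiberwise (f := restrict h)
          (t := {V : TypeBTableau (m + 1) | V.filling (Fin.last m) (Fin.last m) = b})
          fun T hT => by simpa using hT]
        refine sum_congr rfl fun V hV => congr_arg card ?_
        ext T
        simp only [mem_filter, mem_univ, true_and] at hV ⊢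
        exact ⟨And.right, fun hT => ⟨hT ▸ hV, hT⟩⟩
    _ = ∑ V : TypeBTableau (m + 1) with V.filling (Fin.last m) (Fin.last m) = b,
          N #V.unrestrictedRows := sum_congr rfl fun V _ => by
        rw [card_eq_sum_ones]
        exact sum_restrict_fiber V h fun _ => 1
    _ = ∑ W : TypeBTableau m, ∑ V : TypeBTableau (m + 1) with
          V.dropLast = W ∧ V.filling (Fin.last m) (Fin.last m) = b, N #V.unrestrictedRows := by
        rw [← sum_fiberwise _ dropLast]
        simp only [filter_filter, and_comm]
    _ = ∑ W : TypeBTableau m, extensionSum N #W.unrestrictedRows :=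
        sum_congr rfl fun W _ => sum_dropLast_fiber_of_filling W b N

theorem two_mul_card_filling_eq_true (j : Fin n) :
    2 * #{T : TypeBTableau n | T.filling j j = true} = Fintype.card (TypeBTableau n) := by
  have hcard (b : Bool) : #{T : TypeBTableau n | T.filling j j = b} =
      #{T : TypeBTableau n | (T.restrict j.isLt).filling (Fin.last j) (Fin.last j) = b} := rfl
  have hhalf : #{T : TypeBTableau n | T.filling j j = true} =
      #{T : TypeBTableau n | T.filling j j = false} := by
    rw [hcard, hcard, card_filling_restrict_last, card_filling_restrict_last]
  rw [two_mul]
  nth_rewrite 2 [hhalf]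
  simp_rw [← Bool.not_eq_true]
  exact card_filter_add_card_filter_not _

end TypeBTableau

theorem expected_diagonal_ones_general (n : ℕ) :
    (∑ T : TypeBTableau n, (T.numDiagOnes : ℝ)) =
      (n : ℝ) / 2 * (Fintype.card (TypeBTableau n) : ℝ) := by
  have hdiag (T : TypeBTableau n) (j : Fin n) :
      (T.west j = true ∧ T.filling j j = true) ↔ T.filling j j = true :=
    ⟨And.right, fun h => ⟨(T.support j j h).1, h⟩⟩
  calc ∑ T : TypeBTableau n, (T.numDiagOnes : ℝ)
      = ∑ j : Fin n, (#{T : TypeBTableau n | T.filling j j = true} : ℝ) := by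
        simp only [TypeBTableau.numDiagOnes, hdiag, card_filter]
        push_cast
        exact sum_comm
    _ = ∑ _j : Fin n, (Fintype.card (TypeBTableau n) : ℝ) / 2 := by
        refine sum_congr rfl fun j _ => ?_
        rw [eq_div_iff two_ne_zero, ← TypeBTableau.two_mul_card_filling_eq_true j]
        push_cast
        ring
    _ = (n : ℝ) / 2 * (Fintype.card (TypeBTableau n) : ℝ) := by
        rw [sum_const, card_univ, Fintype.card_fin, nsmul_eq_mul]
        ring

/-- The total number of ones on the diagonal over all type-B permutation tableaux
of size `n` equals `(n/2) · |B_n|`; i.e. the expected number of ones on the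
diagonal of a uniformly random type-B permutation tableau of size `n` is `n/2`. -/
theorem expected_diagonal_ones (n : ℕ) (hn : 1 ≤ n) :
    (∑ T : TypeBTableau n, (T.numDiagOnes : ℝ)) =
      (n : ℝ) / 2 * (Fintype.card (TypeBTableau n) : ℝ) :=
  expected_diagonal_ones_general n
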